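/- Let N be a positive integer and let L² be the Hilbert space of square-integrable complex functions on [0,1)^N with Lebesgue measure. For complex coefficients (a_α)_{α ⊆ {1,...,N}} and (a'_α)_{α ⊆ {1,...,N}}, let 𝒜 and 𝒜' be the operators (𝒜u)(k) = Σ_α a_α ∫_{[0,1)^{|α|}} u(k with coordinates in α replaced by x_α) dx_α, and similarly for 𝒜' with a'. Then the composition 𝒜𝒜' is of the same form with coefficients (a''_α)_{α ⊆ {1,...,N}}, and the b-transforms b_α = Σ_{β ⊆ α} a_β, b'_α = Σ_{β ⊆ α} a'_β, b''_α = Σ_{β ⊆ α} a''_β satisfy b''_α = b_α · b'_α for every α ⊆ {1,...,N}; i.e., the map 𝒜 ↦ (Σ_{β ⊆ α} a_β)_{α ⊆ {1,...,N}} is multiplicative into ℂ^{2^N} with pointwise multiplication. -/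

import Mathlib

open MeasureTheory

/-- The cube `[0,1)^ι` with Lebesgue measure, modelled as the product of the
Lebesgue measure on `ℝ` restricted to `[0,1)` over each coordinate. -/
noncomputable def cubeMeasure (ι : Type*) [Fintype ι] : Measure (ι → ℝ) :=
  Measure.pi fun _ => (volume : Measure ℝ).restrict (Set.Ico 0 1)

/-- `∫_{[0,1)^{|α|}} u(k with the coordinates in α replaced by x_α) dx_α`:
integration of `u` over the coordinates indexed by `α`, the remaining
coordinates being those of `k`.  For `α = ∅` this is `u k`. -/
noncomputable def partialIntegral {N : ℕ} (α : Finset (Fin N))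
    (u : (Fin N → ℝ) → ℂ) (k : Fin N → ℝ) : ℂ :=
  ∫ x : {j // j ∈ α} → ℝ, u (fun j => if h : j ∈ α then x ⟨j, h⟩ else k j)
    ∂(cubeMeasure {j // j ∈ α})

/-!
Write `P_s f x = ∫ f (s.piecewise y x) dy` for the average of `f` over the coordinates in `s`
under a product of probability measures. Since `(x, y) ↦ s.piecewise y x` is measure preserving
from the square of the product measure to itself, Fubini gives `P_s P_t = P_{s ∪ t}` almost
everywhere on integrable functions (`L²` of a probability space lies in `L¹`). Hence
`(Σ a_s P_s)(Σ a'_t P_t) = Σ_γ a''_γ P_γ` with `a''_γ = Σ_{s ∪ t = γ} a_s a'_t`, and since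
`s ∪ t ⊆ δ` iff `s ⊆ δ` and `t ⊆ δ`, summing `a''` over the subsets of `δ` factors as `b_δ b'_δ`.
-/

open Finset

theorem Finset.piecewise_piecewise_union {ι : Type*} [DecidableEq ι] {π : ι → Sort*}
    (s t : Finset ι) (x y z : ∀ i, π i) :
    t.piecewise z (s.piecewise y x) = (s ∪ t).piecewise (t.piecewise z y) x := by
  ext i
  by_cases hs : i ∈ s <;> by_cases ht : i ∈ t <;> simp [hs, ht]

section PartialAvg

variable {ι : Type*} [Fintype ι] [DecidableEq ι] {X : ι → Type*} [∀ i, MeasurableSpace (X i)]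
  {μ : ∀ i, Measure (X i)} [∀ i, IsProbabilityMeasure (μ i)] {E : Type*} [NormedAddCommGroup E]

theorem measurePreserving_piecewise_prod (s : Finset ι) :
    MeasurePreserving (fun p : (∀ i, X i) × (∀ i, X i) => s.piecewise p.2 p.1)
      ((Measure.pi μ).prod (Measure.pi μ)) (Measure.pi μ) := by
  have hmeas : Measurable fun p : (∀ i, X i) × (∀ i, X i) => s.piecewise p.2 p.1 := by
    refine measurable_pi_lambda _ fun i => ?_
    by_cases hi : i ∈ s
    · simp only [hi, piecewise_eq_of_mem]; fun_prop
    · simp only [hi, not_false_eq_true, piecewise_eq_of_notMem]; fun_prop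
  refine ⟨hmeas, (Measure.pi_eq fun t ht => ?_).symm⟩
  have hpre : (fun p : (∀ i, X i) × (∀ i, X i) => s.piecewise p.2 p.1) ⁻¹' Set.univ.pi t =
      (Set.univ.pi fun i => if i ∈ s then Set.univ else t i) ×ˢ
        (Set.univ.pi fun i => if i ∈ s then t i else Set.univ) := by
    ext p
    simp only [Set.mem_preimage, Set.mem_prod, Set.mem_univ_pi, ← forall_and]
    refine forall_congr' fun i => ?_
    by_cases hi : i ∈ s <;> simp [hi]
  rw [Measure.map_apply hmeas (MeasurableSet.univ_pi ht), hpre, Measure.prod_prod,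
    Measure.pi_pi, Measure.pi_pi, ← prod_mul_distrib]
  refine prod_congr rfl fun i _ => ?_
  split_ifs <;> simp

theorem ae_integrable_comp_piecewise {f : (∀ i, X i) → E} (hf : Integrable f (Measure.pi μ))
    (s : Finset ι) : ∀ᵐ x ∂Measure.pi μ, Integrable (fun y => f (s.piecewise y x)) (Measure.pi μ) :=
  ((measurePreserving_piecewise_prod s).integrable_comp_of_integrable hf).prod_right_ae

variable [NormedSpace ℝ E]

variable (μ) in
/-- Integrating over the whole product instead of over the coordinates in `s` alone changes
nothing for probability measures (`integral_updateFinset_eq_partialAvg`) and avoids subtypes. -/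
noncomputable def partialAvg (s : Finset ι) (f : (∀ i, X i) → E) (x : ∀ i, X i) : E :=
  ∫ y, f (s.piecewise y x) ∂Measure.pi μ

theorem integral_updateFinset_eq_partialAvg (s : Finset ι) (f : (∀ i, X i) → E) (x : ∀ i, X i) :
    ∫ y, f (Function.updateFinset x s y) ∂Measure.pi (fun i : s => μ i) = partialAvg μ s f x := by
  have he := measurePreserving_piEquivPiSubtypeProd μ (· ∈ s)
  have hupd : ∀ y : ∀ i, X i,
      Function.updateFinset x s (MeasurableEquiv.piEquivPiSubtypeProd X (· ∈ s) y).1 =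
        s.piecewise y x := by
    intro y
    ext i
    by_cases hi : i ∈ s <;> simp [Function.updateFinset, hi]
  simp_rw [partialAvg, ← hupd]
  rw [he.integral_comp' (fun p => f (Function.updateFinset x s p.1)),
    integral_fun_fst (fun y => f (Function.updateFinset x s y)), probReal_univ, one_smul]
  congr!

theorem MeasureTheory.Integrable.partialAvg {f : (∀ i, X i) → E} (hf : Integrable f (Measure.pi μ))
    (s : Finset ι) : Integrable (partialAvg μ s f) (Measure.pi μ) :=
  ((measurePreserving_piecewise_prod s).integrable_comp_of_integrable hf).integral_prod_left

theorem partialAvg_congr_ae {f g : (∀ i, X i) → E} (hfg : f =ᵐ[Measure.pi μ] g) (s : Finset ι) :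
    partialAvg μ s f =ᵐ[Measure.pi μ] partialAvg μ s g := by
  have hprod := (measurePreserving_piecewise_prod s).quasiMeasurePreserving.ae_eq_comp hfg
  filter_upwards [Measure.ae_ae_of_ae_prod hprod] with x hx
  exact integral_congr_ae hx

theorem partialAvg_partialAvg [CompleteSpace E] {f : (∀ i, X i) → E}
    (hf : Integrable f (Measure.pi μ)) (s t : Finset ι) :
    partialAvg μ s (partialAvg μ t f) =ᵐ[Measure.pi μ] partialAvg μ (s ∪ t) f := by
  have ht := measurePreserving_piecewise_prod (μ := μ) t
  filter_upwards [ae_integrable_comp_piecewise hf (s ∪ t)] with x hx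
  have hint : Integrable (fun p : (∀ i, X i) × (∀ i, X i) =>
      f (t.piecewise p.2 (s.piecewise p.1 x))) ((Measure.pi μ).prod (Measure.pi μ)) := by
    simpa only [piecewise_piecewise_union, Function.comp_def] using
      ht.integrable_comp_of_integrable hx
  calc partialAvg μ s (partialAvg μ t f) x
      = ∫ p, f (t.piecewise p.2 (s.piecewise p.1 x)) ∂(Measure.pi μ).prod (Measure.pi μ) :=
        integral_integral hint
    _ = ∫ p, f ((s ∪ t).piecewise (t.piecewise p.2 p.1) x)
          ∂(Measure.pi μ).prod (Measure.pi μ) := by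
        simp only [piecewise_piecewise_union]
    _ = partialAvg μ (s ∪ t) f x := by
        conv_rhs => rw [partialAvg, ← ht.map_eq]
        exact (integral_map ht.aemeasurable (ht.map_eq ▸ hx.1)).symm

end PartialAvg

section UnionConv

variable {ι R : Type*} [Fintype ι] [DecidableEq ι] [CommSemiring R]

def unionConv (a b : Finset ι → R) (γ : Finset ι) : R :=
  ∑ p : Finset ι × Finset ι with p.1 ∪ p.2 = γ, a p.1 * b p.2

theorem sum_unionConv_mul (a b g : Finset ι → R) :
    ∑ γ, unionConv a b γ * g γ = ∑ s, ∑ t, a s * b t * g (s ∪ t) := by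
  calc ∑ γ, unionConv a b γ * g γ
      = ∑ γ, ∑ p : Finset ι × Finset ι with p.1 ∪ p.2 = γ, a p.1 * b p.2 * g (p.1 ∪ p.2) := by
        refine sum_congr rfl fun γ _ => ?_
        rw [unionConv, sum_mul]
        exact sum_congr rfl fun p hp => by rw [(mem_filter.1 hp).2]
    _ = ∑ s, ∑ t, a s * b t * g (s ∪ t) := by
        rw [sum_fiberwise, Fintype.sum_prod_type]

theorem sum_powerset_unionConv (a b : Finset ι → R) (δ : Finset ι) :
    ∑ γ ∈ δ.powerset, unionConv a b γ = (∑ s ∈ δ.powerset, a s) * ∑ t ∈ δ.powerset, b t := by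
  simp_rw [unionConv]
  rw [sum_fiberwise_eq_sum_filter, sum_mul_sum, ← sum_product']
  refine sum_congr ?_ fun _ _ => rfl
  ext p
  simp [union_subset_iff]

end UnionConv

section PartialAvgOp

variable {ι : Type*} [Fintype ι] [DecidableEq ι] {X : ι → Type*} [∀ i, MeasurableSpace (X i)]
  {μ : ∀ i, Measure (X i)} [∀ i, IsProbabilityMeasure (μ i)] {𝕜 : Type*} [RCLike 𝕜]

variable (μ) in
noncomputable def partialAvgOp (a : Finset ι → 𝕜) (f : (∀ i, X i) → 𝕜) (x : ∀ i, X i) : 𝕜 :=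
  ∑ s, a s * partialAvg μ s f x

theorem partialAvgOp_congr_ae (a : Finset ι → 𝕜) {f g : (∀ i, X i) → 𝕜}
    (hfg : f =ᵐ[Measure.pi μ] g) : partialAvgOp μ a f =ᵐ[Measure.pi μ] partialAvgOp μ a g := by
  filter_upwards [ae_all_iff.2 (partialAvg_congr_ae hfg)] with x hx
  simp only [partialAvgOp, hx]

theorem partialAvg_partialAvgOp (b : Finset ι → 𝕜) {f : (∀ i, X i) → 𝕜}
    (hf : Integrable f (Measure.pi μ)) (s : Finset ι) :
    partialAvg μ s (partialAvgOp μ b f) =ᵐ[Measure.pi μ]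
      fun x => ∑ t, b t * partialAvg μ s (partialAvg μ t f) x := by
  filter_upwards [ae_all_iff.2 fun t => ae_integrable_comp_piecewise (hf.partialAvg t) s]
    with x hx
  unfold partialAvgOp
  rw [partialAvg, integral_finsetSum _ fun t _ => (hx t).const_mul (b t)]
  exact sum_congr rfl fun t _ => integral_const_mul _ _

theorem partialAvgOp_partialAvgOp (a b : Finset ι → 𝕜) {f : (∀ i, X i) → 𝕜}
    (hf : Integrable f (Measure.pi μ)) :
    partialAvgOp μ a (partialAvgOp μ b f) =ᵐ[Measure.pi μ] partialAvgOp μ (unionConv a b) f := by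
  filter_upwards [ae_all_iff.2 (partialAvg_partialAvgOp b hf),
    ae_all_iff.2 fun s => ae_all_iff.2 (partialAvg_partialAvg hf s)] with x hlin hcomp
  simp only [partialAvgOp, hlin, hcomp, sum_unionConv_mul, mul_sum, mul_assoc]

end PartialAvgOp

instance : IsProbabilityMeasure ((volume : Measure ℝ).restrict (Set.Ico 0 1)) :=
  ⟨by simp⟩

instance (ι : Type*) [Fintype ι] : IsProbabilityMeasure (cubeMeasure ι) := by
  unfold cubeMeasure; infer_instance

theorem sum_mul_partialIntegral_eq_partialAvgOp {N : ℕ} (a : Finset (Fin N) → ℂ)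
    (u : (Fin N → ℝ) → ℂ) :
    (fun k => ∑ α, a α * partialIntegral α u k) =
      partialAvgOp (fun _ => (volume : Measure ℝ).restrict (Set.Ico 0 1)) a u := by
  ext k
  refine sum_congr rfl fun α _ => congrArg _ ?_
  rw [← integral_updateFinset_eq_partialAvg, partialIntegral, cubeMeasure]
  congr!

theorem stmt_16_general (N : ℕ) (a a' : Finset (Fin N) → ℂ)
    (𝒜 𝒜' : Lp ℂ 2 (cubeMeasure (Fin N)) →L[ℂ] Lp ℂ 2 (cubeMeasure (Fin N)))
    (h𝒜 : ∀ u : Lp ℂ 2 (cubeMeasure (Fin N)),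
      ⇑(𝒜 u) =ᵐ[cubeMeasure (Fin N)] fun k =>
        ∑ α : Finset (Fin N), a α * partialIntegral α (⇑u) k)
    (h𝒜' : ∀ u : Lp ℂ 2 (cubeMeasure (Fin N)),
      ⇑(𝒜' u) =ᵐ[cubeMeasure (Fin N)] fun k =>
        ∑ α : Finset (Fin N), a' α * partialIntegral α (⇑u) k) :
    ∃ a'' : Finset (Fin N) → ℂ,
      (∀ u : Lp ℂ 2 (cubeMeasure (Fin N)),
        ⇑((𝒜 * 𝒜') u) =ᵐ[cubeMeasure (Fin N)] fun k =>
          ∑ α : Finset (Fin N), a'' α * partialIntegral α (⇑u) k) ∧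
      (∀ α : Finset (Fin N),
        ∑ β ∈ α.powerset, a'' β =
          (∑ β ∈ α.powerset, a β) * (∑ β ∈ α.powerset, a' β)) := by
  refine ⟨unionConv a a', fun u => ?_, sum_powerset_unionConv a a'⟩
  simp only [sum_mul_partialIntegral_eq_partialAvgOp] at h𝒜 h𝒜' ⊢
  calc ⇑((𝒜 * 𝒜') u) = 𝒜 (𝒜' u) := rfl
    _ =ᵐ[cubeMeasure (Fin N)] partialAvgOp _ a (𝒜' u) := h𝒜 _
    _ =ᵐ[cubeMeasure (Fin N)] partialAvgOp _ a (partialAvgOp _ a' u) :=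
        partialAvgOp_congr_ae a (h𝒜' u)
    _ =ᵐ[cubeMeasure (Fin N)] partialAvgOp _ (unionConv a a') u :=
        partialAvgOp_partialAvgOp a a' ((Lp.memLp u).integrable one_le_two)

/-- the composition of two operators of the form
`u ↦ Σ_α a_α ∫_{[0,1)^{|α|}} u dx_α` is of the same form, with coefficients
`a''` whose b-transform is the pointwise product of the b-transforms of `a`
and `a'`: `Σ_{β ⊆ α} a''_β = (Σ_{β ⊆ α} a_β)·(Σ_{β ⊆ α} a'_β)` for all `α`. -/
theorem stmt_16 (N : ℕ) (hN : 0 < N) (a a' : Finset (Fin N) → ℂ)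
    (𝒜 𝒜' : Lp ℂ 2 (cubeMeasure (Fin N)) →L[ℂ] Lp ℂ 2 (cubeMeasure (Fin N)))
    (h𝒜 : ∀ u : Lp ℂ 2 (cubeMeasure (Fin N)),
      ⇑(𝒜 u) =ᵐ[cubeMeasure (Fin N)] fun k =>
        ∑ α : Finset (Fin N), a α * partialIntegral α (⇑u) k)
    (h𝒜' : ∀ u : Lp ℂ 2 (cubeMeasure (Fin N)),
      ⇑(𝒜' u) =ᵐ[cubeMeasure (Fin N)] fun k =>
        ∑ α : Finset (Fin N), a' α * partialIntegral α (⇑u) k) :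
    ∃ a'' : Finset (Fin N) → ℂ,
      (∀ u : Lp ℂ 2 (cubeMeasure (Fin N)),
        ⇑((𝒜 * 𝒜') u) =ᵐ[cubeMeasure (Fin N)] fun k =>
          ∑ α : Finset (Fin N), a'' α * partialIntegral α (⇑u) k) ∧
      (∀ α : Finset (Fin N),
        ∑ β ∈ α.powerset, a'' β =
          (∑ β ∈ α.powerset, a β) * (∑ β ∈ α.powerset, a' β)) :=
  stmt_16_general N a a' 𝒜 𝒜' h𝒜 h𝒜'
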